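/- arXiv:hep-th/0607020 — 7 statements merged into one kernel-verified Lean document; each statement's English description precedes it below -/
import Mathlib

section
/- Let C be a monoidal category with tensor unit 𝟙, and fix an exact pairing (coev : 𝟙 ⟶ A ⊗ B, ev : B ⊗ A ⟶ 𝟙) for objects A, B of C. Then the assignment sending an automorphism ℓ : A ≅ A to the pair (coev ≫ (ℓ.inv ▷ B), (B ◁ ℓ.hom) ≫ ev) is a bijection from the group of automorphisms of A onto the set of all pairs of morphisms (coev' : 𝟙 ⟶ A ⊗ B, ev' : B ⊗ A ⟶ 𝟙) that form an exact pairing for (A, B). -/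
open CategoryTheory MonoidalCategory

/-- An *exact pairing* for a pair of objects `(A, B)` in a monoidal category:
morphisms `coev : 𝟙 ⟶ A ⊗ B` and `ev : B ⊗ A ⟶ 𝟙` satisfying the two zigzag
identities (as in Mathlib's `CategoryTheory.ExactPairing`). -/
def IsExactPairing {C : Type*} [Category C] [MonoidalCategory C]
    (A B : C) (coev : 𝟙_ C ⟶ A ⊗ B) (ev : B ⊗ A ⟶ 𝟙_ C) : Prop :=
  (λ_ A).inv ≫ (coev ▷ A) ≫ (α_ A B A).hom ≫ (A ◁ ev) ≫ (ρ_ A).hom = 𝟙 A ∧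
  (ρ_ B).inv ≫ (B ◁ coev) ≫ (α_ B A B).inv ≫ (ev ▷ B) ≫ (λ_ B).hom = 𝟙 B

section Aux

variable {C : Type*} [Category C] [MonoidalCategory C] {A B : C}

/-- The snake morphism `A ⟶ A` built from a candidate coevaluation/evaluation. -/
def auxPhi (A B : C) (c : 𝟙_ C ⟶ A ⊗ B) (e : B ⊗ A ⟶ 𝟙_ C) : A ⟶ A :=
  (λ_ A).inv ≫ (c ▷ A) ≫ (α_ A B A).hom ≫ (A ◁ e) ≫ (ρ_ A).hom

/-- The snake morphism `B ⟶ B` built from a candidate coevaluation/evaluation. -/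
def auxZed (A B : C) (c : 𝟙_ C ⟶ A ⊗ B) (e : B ⊗ A ⟶ 𝟙_ C) : B ⟶ B :=
  (ρ_ B).inv ≫ (B ◁ c) ≫ (α_ B A B).inv ≫ (e ▷ B) ≫ (λ_ B).hom

lemma auxPhi_nat (c : 𝟙_ C ⟶ A ⊗ B) (e : B ⊗ A ⟶ 𝟙_ C) (f : A ⟶ A) :
    auxPhi A B (c ≫ f ▷ B) e = auxPhi A B c e ≫ f := by
  simp only [auxPhi, comp_whiskerRight, Category.assoc]
  rw [associator_naturality_left_assoc, ← whisker_exchange_assoc]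
  simp

lemma auxKey1 (c c' : 𝟙_ C ⟶ A ⊗ B) (e : B ⊗ A ⟶ 𝟙_ C) :
    c ≫ (auxPhi A B c' e) ▷ B = c' ≫ (A ◁ auxZed A B c e) := by
  simp only [auxPhi, auxZed, comp_whiskerRight, MonoidalCategory.whiskerLeft_comp,
    Category.assoc]
  rw [whiskerRight_tensor_symm_assoc c' A B]
  have h1 : (λ_ A).inv ▷ B ≫ (α_ (𝟙_ C) A B).hom = (λ_ (A ⊗ B)).inv := by monoidal
  slice_lhs 2 3 => rw [h1]
  simp only [Category.assoc]
  rw [leftUnitor_inv_naturality_assoc, whisker_exchange_assoc]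
  have h2 : (λ_ (𝟙_ C)).inv ≫ c' ▷ (𝟙_ C) = c' ≫ (ρ_ (A ⊗ B)).inv := by
    rw [rightUnitor_inv_naturality, unitors_inv_equal]
  slice_lhs 1 2 => rw [h2]
  simp only [Category.assoc]
  monoidal

lemma auxKey2 (c : 𝟙_ C ⟶ A ⊗ B) (e e' : B ⊗ A ⟶ 𝟙_ C) :
    (B ◁ auxPhi A B c e') ≫ e = (auxZed A B c e) ▷ A ≫ e' := by
  simp only [auxPhi, auxZed, comp_whiskerRight, MonoidalCategory.whiskerLeft_comp,
    Category.assoc]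
  rw [tensor_whiskerLeft_symm B A e']
  simp only [Category.assoc]
  have hα : (α_ B A (𝟙_ C)).hom ≫ B ◁ (ρ_ A).hom = (ρ_ (B ⊗ A)).hom := by monoidal
  slice_lhs 6 7 => rw [hα]
  rw [← rightUnitor_naturality, whisker_exchange_assoc]
  rw [← unitors_equal, leftUnitor_naturality]
  monoidal

lemma auxConj1 (c : 𝟙_ C ⟶ A ⊗ B) (e : B ⊗ A ⟶ 𝟙_ C) (f g : A ⟶ A) :
    auxPhi A B (c ≫ f ▷ B) ((B ◁ g) ≫ e) = g ≫ auxPhi A B c e ≫ f := by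
  simp only [auxPhi, comp_whiskerRight, MonoidalCategory.whiskerLeft_comp, Category.assoc]
  rw [associator_naturality_left_assoc, ← whisker_exchange_assoc, ← whisker_exchange_assoc]
  rw [← associator_naturality_right_assoc, ← whisker_exchange_assoc]
  rw [← leftUnitor_inv_naturality_assoc]
  simp

lemma auxConj2 (c : 𝟙_ C ⟶ A ⊗ B) (e : B ⊗ A ⟶ 𝟙_ C) (f g : A ⟶ A) (hfg : f ≫ g = 𝟙 A) :
    auxZed A B (c ≫ f ▷ B) ((B ◁ g) ≫ e) = auxZed A B c e := by
  simp only [auxZed, comp_whiskerRight, MonoidalCategory.whiskerLeft_comp, Category.assoc]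
  rw [associator_inv_naturality_middle_assoc]
  slice_lhs 4 5 => rw [← comp_whiskerRight, ← MonoidalCategory.whiskerLeft_comp, hfg]
  simp

end Aux

/-- Fixing an exact pairing `(coev, ev)` for `(A, B)`, the assignment sending an
automorphism `ℓ : A ≅ A` to the pair `(coev ≫ (ℓ.inv ▷ B), (B ◁ ℓ.hom) ≫ ev)` is
a bijection from the group of automorphisms of `A` onto the set of all pairs of
morphisms forming an exact pairing for `(A, B)`.  (The paper's corollary: the
moduli space of fundamental classes of a strong PD pair is isomorphic to the
group of invertible elements of `KK₀(A, A)`.) -/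
theorem exactPairing_moduli_bijection
    {C : Type*} [Category C] [MonoidalCategory C] (A B : C)
    (coev : 𝟙_ C ⟶ A ⊗ B) (ev : B ⊗ A ⟶ 𝟙_ C)
    (h : IsExactPairing A B coev ev) :
    Set.BijOn
      (fun ℓ : A ≅ A => ((coev ≫ (ℓ.inv ▷ B)), ((B ◁ ℓ.hom) ≫ ev)))
      Set.univ
      {p : (𝟙_ C ⟶ A ⊗ B) × (B ⊗ A ⟶ 𝟙_ C) | IsExactPairing A B p.1 p.2} := by
  obtain ⟨h1, h2⟩ := h
  have hPhi : auxPhi A B coev ev = 𝟙 A := h1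
  have hZed : auxZed A B coev ev = 𝟙 B := h2
  refine ⟨?_, ?_, ?_⟩
  · -- MapsTo
    intro ℓ _
    refine ⟨?_, ?_⟩
    · show auxPhi A B (coev ≫ ℓ.inv ▷ B) ((B ◁ ℓ.hom) ≫ ev) = 𝟙 A
      rw [auxConj1, hPhi]
      simp
    · show auxZed A B (coev ≫ ℓ.inv ▷ B) ((B ◁ ℓ.hom) ≫ ev) = 𝟙 B
      rw [auxConj2 _ _ _ _ ℓ.inv_hom_id, hZed]
  · -- InjOn
    intro ℓ _ ℓ' _ hEq
    have hfst : coev ≫ ℓ.inv ▷ B = coev ≫ ℓ'.inv ▷ B := congrArg Prod.fst hEq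
    have : ℓ.inv = ℓ'.inv := by
      have := congrArg (fun x => auxPhi A B x ev) hfst
      simpa [auxPhi_nat, hPhi] using this
    have hsymm : ℓ.symm = ℓ'.symm := Iso.ext this
    calc ℓ = ℓ.symm.symm := (Iso.symm_symm_eq ℓ).symm
      _ = ℓ'.symm.symm := by rw [hsymm]
      _ = ℓ' := Iso.symm_symm_eq ℓ'
  · -- SurjOn
    rintro ⟨c', e'⟩ h'
    obtain ⟨h1', h2'⟩ := h'
    have hPhi' : auxPhi A B c' e' = 𝟙 A := h1'
    have hZed' : auxZed A B c' e' = 𝟙 B := h2'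
    set ψ := auxPhi A B coev e' with hψ
    set φ := auxPhi A B c' ev with hφ
    have hc : coev ≫ φ ▷ B = c' := by
      rw [hφ, auxKey1, hZed]; simp
    have hc' : c' ≫ ψ ▷ B = coev := by
      rw [hψ, auxKey1, hZed']; simp
    have hψφ : ψ ≫ φ = 𝟙 A := by
      rw [hφ, hψ, ← auxPhi_nat, hc]; exact hPhi'
    have hφψ : φ ≫ ψ = 𝟙 A := by
      rw [hψ, hφ, ← auxPhi_nat, hc']; exact hPhi
    refine ⟨⟨ψ, φ, hψφ, hφψ⟩, Set.mem_univ _, ?_⟩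
    have he : (B ◁ ψ) ≫ ev = e' := by
      rw [hψ, auxKey2, hZed]; simp
    simp only [Prod.mk.injEq]
    exact ⟨hc, he⟩
end

section
/- With the Todd class Todd(A) : F A ⟶ F A defined as (λ_{F A}).inv ≫ (coevΞ ▷ F A) ≫ associator ≫ (F A ◁ ch(evΔ)) ≫ (ρ_{F A}).hom, and ToddInv(A) : F A ⟶ F A defined by the same formula with coevΞ replaced by ch(coevΔ) and ch(evΔ) replaced by evΞ, one has Todd(A) ≫ ToddInv(A) = 𝟙_{F A} and ToddInv(A) ≫ Todd(A) = 𝟙_{F A}; in particular the Todd class is invertible. -/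
open CategoryTheory MonoidalCategory Functor.LaxMonoidal Functor.OplaxMonoidal

/-- The structure-corrected image `ch(ev) : F B ⊗ F A ⟶ 𝟙` under a strong
monoidal functor `F` of an evaluation-type morphism `ev : B ⊗ A ⟶ 𝟙`. -/
def chEv {C : Type*} [Category C] [MonoidalCategory C]
    {D : Type*} [Category D] [MonoidalCategory D]
    (F : C ⥤ D) [F.Monoidal] {A B : C} (ev : B ⊗ A ⟶ 𝟙_ C) :
    F.obj B ⊗ F.obj A ⟶ 𝟙_ D :=
  μ F B A ≫ F.map ev ≫ η F

/-- The structure-corrected image `ch(coev) : 𝟙 ⟶ F A ⊗ F B` under a strong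
monoidal functor `F` of a coevaluation-type morphism `coev : 𝟙 ⟶ A ⊗ B`. -/
def chCoev {C : Type*} [Category C] [MonoidalCategory C]
    {D : Type*} [Category D] [MonoidalCategory D]
    (F : C ⥤ D) [F.Monoidal] {A B : C} (coev : 𝟙_ C ⟶ A ⊗ B) :
    𝟙_ D ⟶ F.obj A ⊗ F.obj B :=
  ε F ≫ F.map coev ≫ δ F A B

/-- The Todd class `Todd(A) : F A ⟶ F A`, computed from the cyclic coevaluation
`coevΞ : 𝟙 ⟶ F A ⊗ F A'` and the Chern character image `ch(evΔ)` of the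
K-homology evaluation `evΔ : A' ⊗ A ⟶ 𝟙`:
`Todd(A) = (λ_{F A}).inv ≫ (coevΞ ▷ F A) ≫ associator ≫ (F A ◁ ch(evΔ)) ≫ (ρ_{F A}).hom`. -/
def toddClass {C : Type*} [Category C] [MonoidalCategory C]
    {D : Type*} [Category D] [MonoidalCategory D]
    (F : C ⥤ D) [F.Monoidal] {A A' : C}
    (evΔ : A' ⊗ A ⟶ 𝟙_ C) (coevΞ : 𝟙_ D ⟶ F.obj A ⊗ F.obj A') :
    F.obj A ⟶ F.obj A :=
  (λ_ (F.obj A)).inv ≫ (coevΞ ▷ F.obj A) ≫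
    (α_ (F.obj A) (F.obj A') (F.obj A)).hom ≫ (F.obj A ◁ chEv F evΔ) ≫
      (ρ_ (F.obj A)).hom

/-- The inverse Todd class `ToddInv(A) : F A ⟶ F A`, defined by the same formula
as the Todd class, with `coevΞ` replaced by `ch(coevΔ)` and `ch(evΔ)` replaced
by the cyclic evaluation `evΞ`. -/
def toddInv {C : Type*} [Category C] [MonoidalCategory C]
    {D : Type*} [Category D] [MonoidalCategory D]
    (F : C ⥤ D) [F.Monoidal] {A A' : C}
    (coevΔ : 𝟙_ C ⟶ A ⊗ A') (evΞ : F.obj A' ⊗ F.obj A ⟶ 𝟙_ D) :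
    F.obj A ⟶ F.obj A :=
  (λ_ (F.obj A)).inv ≫ (chCoev F coevΔ ▷ F.obj A) ≫
    (α_ (F.obj A) (F.obj A') (F.obj A)).hom ≫ (F.obj A ◁ evΞ) ≫
      (ρ_ (F.obj A)).hom

/-!
A strong monoidal functor carries the exact pairing `Δ` to an exact pairing `ch(Δ)` between
`F A` and `F Ã`, so `ch(Δ)` and `Ξ` exhibit `F Ã` as a dual of `F A` in two ways. By uniqueness
of duals, the comparison maps `X ⟶ X` built from the coevaluation of one pairing and the
evaluation of the other are mutually inverse, and `Todd(A)`, `ToddInv(A)` are exactly these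
comparison maps.
-/

section

variable {C : Type*} [Category C] [MonoidalCategory C]

abbrev IsExactPairing.toExactPairing {X Y : C} {c : 𝟙_ C ⟶ X ⊗ Y} {e : Y ⊗ X ⟶ 𝟙_ C}
    (h : IsExactPairing X Y c e) : ExactPairing X Y where
  coevaluation' := c
  evaluation' := e
  coevaluation_evaluation' := by
    rw [← cancel_epi (ρ_ Y).inv, ← cancel_mono (λ_ Y).hom]
    simpa using h.2
  evaluation_coevaluation' := by
    rw [← cancel_epi (λ_ X).inv, ← cancel_mono (ρ_ X).hom]
    simpa using h.1

theorem IsExactPairing.map {D : Type*} [Category D] [MonoidalCategory D] (F : C ⥤ D)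
    [F.Monoidal] {X Y : C} {c : 𝟙_ C ⟶ X ⊗ Y} {e : Y ⊗ X ⟶ 𝟙_ C}
    (h : IsExactPairing X Y c e) :
    IsExactPairing (F.obj X) (F.obj Y) (chCoev F c) (chEv F e) :=
  ⟨by simpa [chCoev, chEv] using congrArg F.map h.1,
   by simpa [chCoev, chEv] using congrArg F.map h.2⟩

def pairingComparison {X Y : C} (c : 𝟙_ C ⟶ X ⊗ Y) (e : Y ⊗ X ⟶ 𝟙_ C) : X ⟶ X :=
  (λ_ X).inv ≫ c ▷ X ≫ (α_ X Y X).hom ≫ X ◁ e ≫ (ρ_ X).hom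

theorem IsExactPairing.pairingComparison_comp_pairingComparison {X Y : C}
    {c₁ c₂ : 𝟙_ C ⟶ X ⊗ Y} {e₁ e₂ : Y ⊗ X ⟶ 𝟙_ C}
    (h₁ : IsExactPairing X Y c₁ e₁) (h₂ : IsExactPairing X Y c₂ e₂) :
    pairingComparison c₂ e₁ ≫ pairingComparison c₁ e₂ = 𝟙 X := by
  have h := (leftDualIso h₁.toExactPairing h₂.toExactPairing).hom_inv_id
  simp only [leftDualIso, leftAdjointMate, MonoidalCategory.whiskerLeft_id, id_whiskerRight,
    Category.id_comp] at h
  exact h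

end

/-- Invertibility of the Todd class: given an exact pairing `(coevΔ, evΔ)` for
`(A, A')` in `C` (the K-homology fundamental class) and an exact pairing
`(coevΞ, evΞ)` for `(F A, F A')` in `D` (the cyclic fundamental class),
`Todd(A) ≫ ToddInv(A) = 𝟙` and `ToddInv(A) ≫ Todd(A) = 𝟙`; in particular the
Todd class is invertible. -/
theorem toddClass_isInvertible
    {C : Type*} [Category C] [MonoidalCategory C]
    {D : Type*} [Category D] [MonoidalCategory D]
    (F : C ⥤ D) [F.Monoidal] {A A' : C}
    (coevΔ : 𝟙_ C ⟶ A ⊗ A') (evΔ : A' ⊗ A ⟶ 𝟙_ C)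
    (coevΞ : 𝟙_ D ⟶ F.obj A ⊗ F.obj A') (evΞ : F.obj A' ⊗ F.obj A ⟶ 𝟙_ D)
    (hΔ : IsExactPairing A A' coevΔ evΔ)
    (hΞ : IsExactPairing (F.obj A) (F.obj A') coevΞ evΞ) :
    toddClass F evΔ coevΞ ≫ toddInv F coevΔ evΞ = 𝟙 (F.obj A) ∧
    toddInv F coevΔ evΞ ≫ toddClass F evΔ coevΞ = 𝟙 (F.obj A) ∧
    IsIso (toddClass F evΔ coevΞ) := by
  have hchΔ := hΔ.map F
  have hTodd : toddClass F evΔ coevΞ ≫ toddInv F coevΔ evΞ = 𝟙 (F.obj A) :=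
    hchΔ.pairingComparison_comp_pairingComparison hΞ
  have hToddInv : toddInv F coevΔ evΞ ≫ toddClass F evΔ coevΞ = 𝟙 (F.obj A) :=
    hΞ.pairingComparison_comp_pairingComparison hchΔ
  exact ⟨hTodd, hToddInv, ⟨_, hTodd, hToddInv⟩⟩
end

section
/- Let ℓ : A ≅ A be an isomorphism in C and ℓ_HL : F A ≅ F A an isomorphism in D. Define the modified pairings evΔ' := (Ã ◁ ℓ.hom) ≫ evΔ, coevΔ' := coevΔ ≫ (ℓ.inv ▷ Ã), evΞ' := (F Ã ◁ ℓ_HL.hom) ≫ evΞ, and coevΞ' := coevΞ ≫ (ℓ_HL.inv ▷ F Ã). Then the Todd class of A computed from the modified pairings (coevΔ', evΔ') and (coevΞ', evΞ') equals F.map ℓ.hom ≫ Todd(A) ≫ ℓ_HL.inv. -/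
open CategoryTheory MonoidalCategory Functor.LaxMonoidal Functor.OplaxMonoidal

/-- Covariance of the Todd class under the duality group (part (2) of the
paper's theorem): given exact pairings `(coevΔ, evΔ)` for `(A, A')` in `C` and
`(coevΞ, evΞ)` for `(F A, F A')` in `D`, an isomorphism `ℓ : A ≅ A` in `C` and
an isomorphism `ℓHL : F A ≅ F A` in `D`, the Todd class computed from the
modified pairings `evΔ' = (A' ◁ ℓ.hom) ≫ evΔ`, `coevΔ' = coevΔ ≫ (ℓ.inv ▷ A')`,
`evΞ' = (F A' ◁ ℓHL.hom) ≫ evΞ`, `coevΞ' = coevΞ ≫ (ℓHL.inv ▷ F A')` equals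
`F.map ℓ.hom ≫ Todd(A) ≫ ℓHL.inv`. -/
theorem toddClass_dualityGroup_action
    {C : Type*} [Category C] [MonoidalCategory C]
    {D : Type*} [Category D] [MonoidalCategory D]
    (F : C ⥤ D) [F.Monoidal] {A A' : C}
    (coevΔ : 𝟙_ C ⟶ A ⊗ A') (evΔ : A' ⊗ A ⟶ 𝟙_ C)
    (coevΞ : 𝟙_ D ⟶ F.obj A ⊗ F.obj A') (evΞ : F.obj A' ⊗ F.obj A ⟶ 𝟙_ D)
    (hΔ : IsExactPairing A A' coevΔ evΔ)
    (hΞ : IsExactPairing (F.obj A) (F.obj A') coevΞ evΞ)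
    (ℓ : A ≅ A) (ℓHL : F.obj A ≅ F.obj A) :
    toddClass F ((A' ◁ ℓ.hom) ≫ evΔ) (coevΞ ≫ (ℓHL.inv ▷ F.obj A')) =
      F.map ℓ.hom ≫ toddClass F evΔ coevΞ ≫ ℓHL.inv := by
  have hch : chEv F ((A' ◁ ℓ.hom) ≫ evΔ)
      = (F.obj A' ◁ F.map ℓ.hom) ≫ chEv F evΔ := by
    simp [chEv, Functor.LaxMonoidal.μ_natural_right_assoc]
  rw [toddClass, toddClass, hch]
  simp only [comp_whiskerRight, MonoidalCategory.whiskerLeft_comp, Category.assoc]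
  rw [associator_naturality_left_assoc, ← whisker_exchange_assoc,
    ← whisker_exchange_assoc, rightUnitor_naturality,
    ← associator_naturality_right_assoc, ← whisker_exchange_assoc,
    ← leftUnitor_inv_naturality_assoc]
end

section
/- Let f̃ : Ã ⟶ B̃ be a morphism of C (modeling the opposite morphism f° of a map f : A ⟶ B of noncommutative spacetimes). Let f! : B ⟶ A be the Gysin morphism of f̃ in C (computed from coevΔA and evΔB) and let f^{HL}! : F B ⟶ F A be the Gysin morphism in D of ch(f̃) : F Ã ⟶ F B̃ (computed from coevΞA and evΞB). Then F.map (f!) = Todd(B) ≫ f^{HL}! ≫ ToddInv(A). -/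
open CategoryTheory MonoidalCategory Functor.LaxMonoidal Functor.OplaxMonoidal

/-- The Gysin morphism (mate) `u! : B ⟶ A` of a morphism `u : A' ⟶ B'` (where
`A'`, `B'` are the duals of `A`, `B`), computed from a coevaluation
`coevA : 𝟙 ⟶ A ⊗ A'` and an evaluation `evB : B' ⊗ B ⟶ 𝟙`:
`u! = (λ_B).inv ≫ (coevA ▷ B) ≫ (α_{A,A',B}).hom ≫ (A ◁ (u ▷ B)) ≫ (A ◁ evB) ≫ (ρ_A).hom`. -/
def gysin {C : Type*} [Category C] [MonoidalCategory C]
    {A A' B B' : C} (coevA : 𝟙_ C ⟶ A ⊗ A') (evB : B' ⊗ B ⟶ 𝟙_ C)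
    (u : A' ⟶ B') : B ⟶ A :=
  (λ_ B).inv ≫ (coevA ▷ B) ≫ (α_ A A' B).hom ≫ (A ◁ (u ▷ B)) ≫ (A ◁ evB) ≫ (ρ_ A).hom


section Auxiliary

variable {D : Type*} [Category D] [MonoidalCategory D]

/-- The second zigzag identity of an `IsExactPairing`, in `⊗≫` (monoidalComp) form. -/
lemma IsExactPairing.zig₂ {A B : D} {coev : 𝟙_ D ⟶ A ⊗ B} {ev : B ⊗ A ⟶ 𝟙_ D}
    (h : IsExactPairing A B coev ev) :
    B ◁ coev ⊗≫ ev ▷ B = ⊗𝟙.hom := by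
  have h2 : B ◁ coev ≫ (α_ B A B).inv ≫ ev ▷ B = (ρ_ B).hom ≫ (λ_ B).inv := by
    rw [← cancel_epi (ρ_ B).inv, ← cancel_mono (λ_ B).hom]
    simpa using h.2
  convert h2 <;> simp [monoidalComp]

lemma keyA {Q Q' : D} (c : 𝟙_ D ⟶ Q ⊗ Q') (e : Q' ⊗ Q ⟶ 𝟙_ D)
    (zig : Q' ◁ c ⊗≫ e ▷ Q' = ⊗𝟙.hom) (m : Q' ⊗ Q ⟶ 𝟙_ D) :
    Q' ◁ ((λ_ Q).inv ≫ c ▷ Q ≫ (α_ Q Q' Q).hom ≫ Q ◁ m ≫ (ρ_ Q).hom) ≫ e = m := by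
  calc
    _ = 𝟙 _ ⊗≫ Q' ◁ c ▷ Q ⊗≫ ((Q' ⊗ Q) ◁ m ≫ e ▷ (𝟙_ D)) ⊗≫ 𝟙 _ := by monoidal
    _ = 𝟙 _ ⊗≫ (Q' ◁ c ⊗≫ e ▷ Q') ▷ Q ⊗≫ m := by rw [whisker_exchange]; monoidal
    _ = m := by rw [zig]; monoidal

lemma keyB {A A' : D} (c : 𝟙_ D ⟶ A ⊗ A') (eA : A' ⊗ A ⟶ 𝟙_ D)
    (zig : A' ◁ c ⊗≫ eA ▷ A' = ⊗𝟙.hom) (k : 𝟙_ D ⟶ A ⊗ A') :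
    c ≫ (((λ_ A).inv ≫ k ▷ A ≫ (α_ A A' A).hom ≫ A ◁ eA ≫ (ρ_ A).hom) ▷ A') = k := by
  calc
    _ = 𝟙 _ ⊗≫ ((𝟙_ D) ◁ c ≫ k ▷ (A ⊗ A')) ⊗≫ A ◁ eA ▷ A' ⊗≫ 𝟙 _ := by monoidal
    _ = k ⊗≫ A ◁ (A' ◁ c ⊗≫ eA ▷ A') ⊗≫ 𝟙 _ := by rw [whisker_exchange]; monoidal
    _ = k := by rw [zig]; monoidal

lemma absorb_left {A A' Q Q' : D} (cA : 𝟙_ D ⟶ A ⊗ A') (e : Q' ⊗ Q ⟶ 𝟙_ D)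
    (v : A' ⟶ Q') {T : Q ⟶ Q} {m : Q' ⊗ Q ⟶ 𝟙_ D} (hT : Q' ◁ T ≫ e = m) :
    T ≫ gysin cA e v = gysin cA m v := by
  rw [← hT]
  calc T ≫ gysin cA e v
      = 𝟙 _ ⊗≫ ((𝟙_ D) ◁ T ≫ cA ▷ Q) ⊗≫ A ◁ (v ▷ Q) ⊗≫ A ◁ e ⊗≫ 𝟙 _ := by
        rw [gysin]; monoidal
    _ = 𝟙 _ ⊗≫ cA ▷ Q ⊗≫ A ◁ (A' ◁ T ≫ v ▷ Q) ⊗≫ A ◁ e ⊗≫ 𝟙 _ := by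
        rw [whisker_exchange]; monoidal
    _ = 𝟙 _ ⊗≫ cA ▷ Q ⊗≫ A ◁ (v ▷ Q) ⊗≫ A ◁ (Q' ◁ T ≫ e) ⊗≫ 𝟙 _ := by
        rw [whisker_exchange]; monoidal
    _ = gysin cA (Q' ◁ T ≫ e) v := by rw [gysin]; monoidal

lemma absorb_right {A A' Q Q' : D} (c : 𝟙_ D ⟶ A ⊗ A') (e : Q' ⊗ Q ⟶ 𝟙_ D)
    (v : A' ⟶ Q') {t : A ⟶ A} {k : 𝟙_ D ⟶ A ⊗ A'} (hk : c ≫ t ▷ A' = k) :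
    gysin c e v ≫ t = gysin k e v := by
  rw [← hk]
  calc gysin c e v ≫ t
      = 𝟙 _ ⊗≫ c ▷ Q ⊗≫ (A ◁ (v ▷ Q ≫ e) ≫ t ▷ (𝟙_ D)) ⊗≫ 𝟙 _ := by
        rw [gysin]; monoidal
    _ = 𝟙 _ ⊗≫ ((c ≫ t ▷ A') ▷ Q) ⊗≫ A ◁ (v ▷ Q ≫ e) ⊗≫ 𝟙 _ := by
        rw [whisker_exchange]; monoidal
    _ = gysin (c ≫ t ▷ A') e v := by rw [gysin]; monoidal

set_option maxRecDepth 4000 in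
lemma map_gysin {C : Type*} [Category C] [MonoidalCategory C]
    (F : C ⥤ D) [F.Monoidal] {A A' B B' : C}
    (coevA : 𝟙_ C ⟶ A ⊗ A') (evB : B' ⊗ B ⟶ 𝟙_ C) (u : A' ⟶ B') :
    F.map (gysin coevA evB u) = gysin (chCoev F coevA) (chEv F evB) (F.map u) := by
  simp only [gysin, chCoev, chEv, Functor.map_comp,
    Functor.Monoidal.map_whiskerLeft, Functor.Monoidal.map_whiskerRight,
    Functor.Monoidal.map_associator, Functor.Monoidal.map_leftUnitor_inv,
    Functor.Monoidal.map_rightUnitor, Category.assoc,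
    MonoidalCategory.whiskerLeft_comp, MonoidalCategory.comp_whiskerRight]
  simp

end Auxiliary

/-- The Grothendieck–Riemann–Roch theorem (strong case, even degree): given
exact pairings `(coevΔA, evΔA)` for `(A, A')` and `(coevΔB, evΔB)` for `(B, B')`
in `C`, and exact pairings `(coevΞA, evΞA)` for `(F A, F A')` and
`(coevΞB, evΞB)` for `(F B, F B')` in `D`, and a morphism `f' : A' ⟶ B'`
(modeling the opposite morphism `f°`), with Gysin morphisms `f! : B ⟶ A` in `C`
and `f^{HL}! : F B ⟶ F A` in `D` of `ch(f') = F.map f'`, one has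
`F.map (f!) = Todd(B) ≫ f^{HL}! ≫ ToddInv(A)`. -/
theorem grothendieck_riemann_roch_strong
    {C : Type*} [Category C] [MonoidalCategory C]
    {D : Type*} [Category D] [MonoidalCategory D]
    (F : C ⥤ D) [F.Monoidal] {A A' B B' : C}
    (coevΔA : 𝟙_ C ⟶ A ⊗ A') (evΔA : A' ⊗ A ⟶ 𝟙_ C)
    (coevΔB : 𝟙_ C ⟶ B ⊗ B') (evΔB : B' ⊗ B ⟶ 𝟙_ C)
    (coevΞA : 𝟙_ D ⟶ F.obj A ⊗ F.obj A') (evΞA : F.obj A' ⊗ F.obj A ⟶ 𝟙_ D)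
    (coevΞB : 𝟙_ D ⟶ F.obj B ⊗ F.obj B') (evΞB : F.obj B' ⊗ F.obj B ⟶ 𝟙_ D)
    (hΔA : IsExactPairing A A' coevΔA evΔA)
    (hΔB : IsExactPairing B B' coevΔB evΔB)
    (hΞA : IsExactPairing (F.obj A) (F.obj A') coevΞA evΞA)
    (hΞB : IsExactPairing (F.obj B) (F.obj B') coevΞB evΞB)
    (f' : A' ⟶ B') :
    F.map (gysin coevΔA evΔB f') =
      toddClass F evΔB coevΞB ≫ gysin coevΞA evΞB (F.map f') ≫
        toddInv F coevΔA evΞA := by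
  have h1 : toddClass F evΔB coevΞB ≫ gysin coevΞA evΞB (F.map f') =
      gysin coevΞA (chEv F evΔB) (F.map f') :=
    absorb_left _ _ _ (keyA coevΞB evΞB hΞB.zig₂ (chEv F evΔB))
  have h2 : gysin coevΞA (chEv F evΔB) (F.map f') ≫ toddInv F coevΔA evΞA =
      gysin (chCoev F coevΔA) (chEv F evΔB) (F.map f') :=
    absorb_right _ _ _ (keyB coevΞA evΞA hΞA.zig₂ (chCoev F coevΔA))
  rw [map_gysin, ← h2, ← h1, Category.assoc]
end

section
/- With the Todd class Todd(A) : F A ⟶ F A defined as (λ_{F A}).inv ≫ (coevΞ ▷ F A) ≫ associator ≫ (F A ◁ ch(evΔ)) ≫ (ρ_{F A}).hom, one has (F Ã ◁ Todd(A)) ≫ evΞ = ch(evΔ); that is, inserting the Todd class into the A-variable of the cyclic fundamental pairing yields the Chern character image of the K-homology fundamental pairing. -/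
open CategoryTheory MonoidalCategory Functor.LaxMonoidal Functor.OplaxMonoidal

/-- Inserting the Todd class into the `A`-variable of the cyclic fundamental
pairing yields the Chern character image of the K-homology fundamental pairing:
`(F A' ◁ Todd(A)) ≫ evΞ = ch(evΔ)`.  (The identity `Todd(A) ⊗_A Ξ = ch(Δ)` used
in the paper's proof of the isometric pairing formula.) -/
theorem toddClass_comp_evΞ
    {C : Type*} [Category C] [MonoidalCategory C]
    {D : Type*} [Category D] [MonoidalCategory D]
    (F : C ⥤ D) [F.Monoidal] {A A' : C}
    (coevΔ : 𝟙_ C ⟶ A ⊗ A') (evΔ : A' ⊗ A ⟶ 𝟙_ C)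
    (coevΞ : 𝟙_ D ⟶ F.obj A ⊗ F.obj A') (evΞ : F.obj A' ⊗ F.obj A ⟶ 𝟙_ D)
    (hΔ : IsExactPairing A A' coevΔ evΔ)
    (hΞ : IsExactPairing (F.obj A) (F.obj A') coevΞ evΞ) :
    (F.obj A' ◁ toddClass F evΔ coevΞ) ≫ evΞ = chEv F evΔ := by
  obtain ⟨-, h2⟩ := hΞ
  have hcoh : F.obj A' ◁ coevΞ ≫ (α_ (F.obj A') (F.obj A) (F.obj A')).inv ≫
      evΞ ▷ F.obj A' = (ρ_ (F.obj A')).hom ≫ (λ_ (F.obj A')).inv := by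
    rw [← cancel_epi (ρ_ (F.obj A')).inv, ← cancel_mono (λ_ (F.obj A')).hom]
    simpa [Category.assoc] using h2
  simp only [toddClass]
  calc
    _ = 𝟙 _ ⊗≫ F.obj A' ◁ coevΞ ▷ F.obj A ⊗≫
        ((F.obj A' ⊗ F.obj A) ◁ chEv F evΔ ≫ evΞ ▷ 𝟙_ D) ⊗≫ 𝟙 _ := by
      monoidal
    _ = 𝟙 _ ⊗≫ (F.obj A' ◁ coevΞ ≫ (α_ (F.obj A') (F.obj A) (F.obj A')).inv ≫
        evΞ ▷ F.obj A') ▷ F.obj A ⊗≫ chEv F evΔ := by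
      rw [whisker_exchange]; monoidal
    _ = chEv F evΔ := by
      rw [hcoh]; monoidal
end

section
/- With ToddInv(A) : F A ⟶ F A defined as (λ_{F A}).inv ≫ (ch(coevΔ) ▷ F A) ≫ associator ≫ (F A ◁ evΞ) ≫ (ρ_{F A}).hom (the inverse of the Todd class), one has coevΞ ≫ (ToddInv(A) ▷ F Ã) = ch(coevΔ); that is, inserting the inverse Todd class into the A-variable of the inverse cyclic fundamental class yields the Chern character image of the inverse K-homology fundamental class. -/
open CategoryTheory MonoidalCategory Functor.LaxMonoidal Functor.OplaxMonoidal

/-- Auxiliary lemma: for an exact pairing `(coev, ev)` on `(X, Y)` and any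
`c : 𝟙 ⟶ X ⊗ Y`, inserting the "transpose" of `c` into `coev` recovers `c`. -/
lemma coev_comp_transpose_whiskerRight {D : Type*} [Category D] [MonoidalCategory D] {X Y : D}
    (coev : 𝟙_ D ⟶ X ⊗ Y) (ev : Y ⊗ X ⟶ 𝟙_ D)
    (h1 : (λ_ X).inv ≫ (coev ▷ X) ≫ (α_ X Y X).hom ≫ (X ◁ ev) ≫ (ρ_ X).hom = 𝟙 X)
    (h2 : (ρ_ Y).inv ≫ (Y ◁ coev) ≫ (α_ Y X Y).inv ≫ (ev ▷ Y) ≫ (λ_ Y).hom = 𝟙 Y)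
    (c : 𝟙_ D ⟶ X ⊗ Y) :
    coev ≫ (((λ_ X).inv ≫ (c ▷ X) ≫ (α_ X Y X).hom ≫ (X ◁ ev) ≫ (ρ_ X).hom) ▷ Y) = c := by
  letI P : ExactPairing X Y :=
    { coevaluation' := coev
      evaluation' := ev
      coevaluation_evaluation' := by
        rw [← cancel_epi (ρ_ Y).inv, ← cancel_mono (λ_ Y).hom]
        simpa using h2
      evaluation_coevaluation' := by
        rw [← cancel_epi (λ_ X).inv, ← cancel_mono (ρ_ X).hom]
        simpa using h1 }
  apply (tensorRightHomEquiv (𝟙_ D) X Y X).symm.injective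
  have key := tensorRightHomEquiv_symm_coevaluation_comp_whiskerRight
    (Y' := Y) (Z := X) ((λ_ X).inv ≫ (c ▷ X) ≫ (α_ X Y X).hom ≫ (X ◁ ev) ≫ (ρ_ X).hom)
  rw [show (η_ X Y : 𝟙_ D ⟶ X ⊗ Y) = coev from rfl] at key
  rw [key]
  simp [tensorRightHomEquiv]
  rfl

/-- Inserting the inverse Todd class into the `A`-variable of the inverse
cyclic fundamental class yields the Chern character image of the inverse
K-homology fundamental class:
`coevΞ ≫ (ToddInv(A) ▷ F A') = ch(coevΔ)`.  (The identity
`ch(Δ∨) = Ξ∨ ⊗_A Todd(A)⁻¹` used in the paper's proof of the dual version of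
the D-brane charge formula.) -/
theorem coevΞ_comp_toddInv
    {C : Type*} [Category C] [MonoidalCategory C]
    {D : Type*} [Category D] [MonoidalCategory D]
    (F : C ⥤ D) [F.Monoidal] {A A' : C}
    (coevΔ : 𝟙_ C ⟶ A ⊗ A') (evΔ : A' ⊗ A ⟶ 𝟙_ C)
    (coevΞ : 𝟙_ D ⟶ F.obj A ⊗ F.obj A') (evΞ : F.obj A' ⊗ F.obj A ⟶ 𝟙_ D)
    (hΔ : IsExactPairing A A' coevΔ evΔ)
    (hΞ : IsExactPairing (F.obj A) (F.obj A') coevΞ evΞ) :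
    coevΞ ≫ (toddInv F coevΔ evΞ ▷ F.obj A') = chCoev F coevΔ :=
  coev_comp_transpose_whiskerRight coevΞ evΞ hΞ.1 hΞ.2 (chCoev F coevΔ)
end

section
/- Todd(A) = 𝟙_{F A} if and only if ch(evΔ) = evΞ; that is, the Todd class of A is trivial precisely when the Chern character image of the K-homology fundamental class coincides with the cyclic fundamental class. -/
open CategoryTheory MonoidalCategory Functor.LaxMonoidal Functor.OplaxMonoidal

private lemma pairing_mixed_zigzag_iff {D : Type*} [Category D] [MonoidalCategory D] {X Y : D}
    (c : 𝟙_ D ⟶ X ⊗ Y) (e : Y ⊗ X ⟶ 𝟙_ D)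
    (h1 : (λ_ X).inv ≫ (c ▷ X) ≫ (α_ X Y X).hom ≫ (X ◁ e) ≫ (ρ_ X).hom = 𝟙 X)
    (h2 : (ρ_ Y).inv ≫ (Y ◁ c) ≫ (α_ Y X Y).inv ≫ (e ▷ Y) ≫ (λ_ Y).hom = 𝟙 Y)
    (g : Y ⊗ X ⟶ 𝟙_ D) :
    (λ_ X).inv ≫ (c ▷ X) ≫ (α_ X Y X).hom ≫ (X ◁ g) ≫ (ρ_ X).hom = 𝟙 X ↔ g = e := by
  letI P : ExactPairing X Y :=
    { coevaluation' := c
      evaluation' := e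
      coevaluation_evaluation' := by
        rw [← cancel_epi (ρ_ Y).inv, ← cancel_mono (λ_ Y).hom]
        simpa using h2
      evaluation_coevaluation' := by
        rw [← cancel_epi (λ_ X).inv, ← cancel_mono (ρ_ X).hom]
        simpa using h1 }
  have hc : η_ X Y = c := rfl
  let eqv := tensorLeftHomEquiv X X Y (𝟙_ D)
  have key : ∀ f : Y ⊗ X ⟶ 𝟙_ D,
      (λ_ X).inv ≫ (c ▷ X) ≫ (α_ X Y X).hom ≫ (X ◁ f) ≫ (ρ_ X).hom = 𝟙 X
        ↔ eqv f = (ρ_ X).inv := by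
    intro f
    constructor
    · intro h
      have : eqv f ≫ (ρ_ X).hom = 𝟙 X := by
        simpa [eqv, tensorLeftHomEquiv, hc] using h
      rw [← cancel_mono (ρ_ X).hom]; simpa using this
    · intro h
      have : eqv f = (λ_ X).inv ≫ (c ▷ X) ≫ (α_ X Y X).hom ≫ (X ◁ f) := by
        simp [eqv, tensorLeftHomEquiv, hc]
      rw [this] at h
      rw [← cancel_mono (ρ_ X).inv]
      simpa using h
  rw [key g, ← (key e).mp h1]
  exact eqv.apply_eq_iff_eq

/-- Triviality of the Todd class: given an exact pairing `(coevΔ, evΔ)` for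
`(A, A')` in `C` and an exact pairing `(coevΞ, evΞ)` for `(F A, F A')` in `D`,
the Todd class of `A` is the identity if and only if the Chern character image
of the K-homology fundamental class coincides with the cyclic fundamental
class: `Todd(A) = 𝟙 ↔ ch(evΔ) = evΞ`. -/
theorem toddClass_eq_id_iff
    {C : Type*} [Category C] [MonoidalCategory C]
    {D : Type*} [Category D] [MonoidalCategory D]
    (F : C ⥤ D) [F.Monoidal] {A A' : C}
    (coevΔ : 𝟙_ C ⟶ A ⊗ A') (evΔ : A' ⊗ A ⟶ 𝟙_ C)
    (coevΞ : 𝟙_ D ⟶ F.obj A ⊗ F.obj A') (evΞ : F.obj A' ⊗ F.obj A ⟶ 𝟙_ D)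
    (hΔ : IsExactPairing A A' coevΔ evΔ)
    (hΞ : IsExactPairing (F.obj A) (F.obj A') coevΞ evΞ) :
    toddClass F evΔ coevΞ = 𝟙 (F.obj A) ↔ chEv F evΔ = evΞ := by
  exact pairing_mixed_zigzag_iff coevΞ evΞ hΞ.1 hΞ.2 (chEv F evΔ)
end
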